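/- arXiv:2308.15414 — 2 statements merged into one kernel-verified Lean document; each statement's English description precedes it below -/
import Mathlib

section
/- Let E be a Banach lattice and let P be a linear subspace of the bounded operators on E that is closed in the operator norm. On the set r-P(E) of r-P-operators define ‖T‖_{r-P} = inf{‖S‖ : ±T ≤ S, S ∈ P}. Then ‖·‖_{r-P} is a norm on r-P(E) satisfying ‖T‖_{r-P} ≥ ‖T‖_r ≥ ‖T‖ for all T ∈ r-P(E), where ‖T‖_r = inf{‖S‖ : ±T ≤ S, S a bounded operator on E} is the regular norm, and r-P(E) is complete with respect to ‖·‖_{r-P}: every ‖·‖_{r-P}-Cauchy sequence in r-P(E) converges in the norm ‖·‖_{r-P} to an element of r-P(E). -/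
/-!
An r-`P`-operator `T = T₁ - T₂` satisfies `±T ≤ T₁ + T₂ ∈ P`, and conversely `T ∈ P` with
`±T ≤ S ∈ P` gives `T = ½(S + T) - ½(S - T)`. So r-`P`(E) consists of the `T ∈ P` that have a
dominant in `P`, and the norm axioms follow by adding and scaling dominants. Since `±T ≤ S`
forces `|T x| ≤ S |x|`, the solid norm gives `‖T‖ ≤ ‖S‖`, whence `‖T‖ ≤ ‖T‖_r ≤ ‖T‖_{r-P}`.

For completeness, a `‖·‖_{r-P}`-Cauchy sequence `f` is Cauchy in operator norm, so it converges
to some `T ∈ P`. Along a subsequence `f ∘ φ` whose consecutive differences have dominants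
`D k ∈ P` with `‖D k‖ < 2⁻ᵏ`, the tail `∑_{k ≥ n} D k` lies in the closed space `P` and
dominates `T - f (φ n)`, which is therefore an r-`P`-operator of r-`P`-norm at most `2¹⁻ⁿ`.
-/

open Filter Topology

/-- A bounded operator on a Banach lattice is positive if it maps positive elements to
positive elements. -/
def IsPosOp {E : Type*} [NormedAddCommGroup E] [Lattice E] [HasSolidNorm E] [IsOrderedAddMonoid E] [NormedSpace ℝ E]
    (T : E →L[ℝ] E) : Prop :=
  ∀ x : E, 0 ≤ x → 0 ≤ T x

/-- The operator order: `S ≤ T` iff `T - S` is a positive operator. -/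
def OpLE {E : Type*} [NormedAddCommGroup E] [Lattice E] [HasSolidNorm E] [IsOrderedAddMonoid E] [NormedSpace ℝ E]
    (S T : E →L[ℝ] E) : Prop :=
  IsPosOp (T - S)

/-- `T` is an r-`P`-operator if `T = T₁ - T₂` with `T₁, T₂` positive operators in `P`. -/
def IsRPOp {E : Type*} [NormedAddCommGroup E] [Lattice E] [HasSolidNorm E] [IsOrderedAddMonoid E] [NormedSpace ℝ E]
    (P : Set (E →L[ℝ] E)) (T : E →L[ℝ] E) : Prop :=
  ∃ T₁ T₂ : E →L[ℝ] E, T₁ ∈ P ∧ T₂ ∈ P ∧ IsPosOp T₁ ∧ IsPosOp T₂ ∧ T = T₁ - T₂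

/-- The r-`P` norm: `‖T‖_{r-P} = inf {‖S‖ : ±T ≤ S ∈ P}`. -/
noncomputable def rPNorm {E : Type*} [NormedAddCommGroup E] [Lattice E] [HasSolidNorm E] [IsOrderedAddMonoid E] [NormedSpace ℝ E]
    (P : Set (E →L[ℝ] E)) (T : E →L[ℝ] E) : ℝ :=
  sInf {c : ℝ | ∃ S ∈ P, OpLE T S ∧ OpLE (-T) S ∧ ‖S‖ = c}

/-- The regular norm: `‖T‖_r = inf {‖S‖ : ±T ≤ S ∈ L(E)}`. -/
noncomputable def regNorm {E : Type*} [NormedAddCommGroup E] [Lattice E] [HasSolidNorm E] [IsOrderedAddMonoid E] [NormedSpace ℝ E]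
    (T : E →L[ℝ] E) : ℝ :=
  sInf {c : ℝ | ∃ S : E →L[ℝ] E, OpLE T S ∧ OpLE (-T) S ∧ ‖S‖ = c}

section

variable {E : Type*} [NormedAddCommGroup E] [Lattice E] [HasSolidNorm E] [IsOrderedAddMonoid E]
  [NormedSpace ℝ E]

/- `E` is not assumed to be an ordered module: nonnegative dyadic multiples of `x ≥ 0` are
nonnegative by halving (`nsmul_two_semiclosed`), and the positive cone is closed. -/
theorem real_smul_nonneg {c : ℝ} (hc : 0 ≤ c) {x : E} (hx : 0 ≤ x) : 0 ≤ c • x := by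
  have dyadic : ∀ m k : ℕ, 0 ≤ ((k : ℝ) / 2 ^ m) • x := by
    intro m
    induction m with
    | zero =>
      intro k
      rw [pow_zero, div_one, Nat.cast_smul_eq_nsmul]
      exact nsmul_nonneg hx k
    | succ m ih =>
      intro k
      refine nsmul_two_semiclosed ?_
      convert ih k using 1
      rw [two_nsmul, ← add_smul]
      congr 1
      ring
  have hlim : Tendsto (fun m : ℕ => ((⌊c * 2 ^ m⌋₊ : ℝ) / 2 ^ m) • x) atTop (𝓝 (c • x)) :=
    ((tendsto_nat_floor_mul_div_atTop hc).comp
      (tendsto_pow_atTop_atTop_of_one_lt one_lt_two)).smul_const x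
  exact isClosed_nonneg.mem_of_tendsto hlim (Eventually.of_forall fun m => dyadic m _)

theorem IsPosOp.add {A B : E →L[ℝ] E} (hA : IsPosOp A) (hB : IsPosOp B) : IsPosOp (A + B) :=
  fun x hx => add_nonneg (hA x hx) (hB x hx)

theorem IsPosOp.smul {c : ℝ} (hc : 0 ≤ c) {A : E →L[ℝ] E} (hA : IsPosOp A) : IsPosOp (c • A) :=
  fun x hx => real_smul_nonneg hc (hA x hx)

theorem isClosed_setOf_isPosOp : IsClosed {A : E →L[ℝ] E | IsPosOp A} := by
  simp only [IsPosOp, Set.ofPred_forall]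
  exact isClosed_iInter fun x => isClosed_iInter fun _ =>
    isClosed_nonneg.preimage (ContinuousLinearMap.apply ℝ E x).continuous

def AbsLE (T S : E →L[ℝ] E) : Prop :=
  OpLE T S ∧ OpLE (-T) S

variable {T T' S S' : E →L[ℝ] E}

theorem absLE_iff : AbsLE T S ↔ IsPosOp (S - T) ∧ IsPosOp (S + T) := by
  rw [AbsLE, OpLE, OpLE, sub_neg_eq_add]

theorem absLE_neg_iff : AbsLE (-T) S ↔ AbsLE T S := by
  rw [AbsLE, AbsLE, neg_neg, and_comm]

theorem AbsLE.zero : AbsLE (0 : E →L[ℝ] E) 0 :=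
  absLE_iff.2 ⟨fun x _ => by simp, fun x _ => by simp⟩

theorem AbsLE.add (h : AbsLE T S) (h' : AbsLE T' S') : AbsLE (T + T') (S + S') := by
  rw [absLE_iff] at *
  constructor
  · convert h.1.add h'.1 using 1; abel
  · convert h.2.add h'.2 using 1; abel

theorem AbsLE.smul (h : AbsLE T S) (a : ℝ) : AbsLE (a • T) (|a| • S) := by
  wlog ha : 0 ≤ a generalizing T a
  · simpa using this (absLE_neg_iff.2 h) (-a) (by linarith)
  rw [abs_of_nonneg ha]
  rw [absLE_iff] at *
  exact ⟨by simpa [smul_sub] using h.1.smul ha, by simpa [smul_add] using h.2.smul ha⟩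

theorem AbsLE.isPosOp (h : AbsLE T S) : IsPosOp S := fun x hx => by
  rw [absLE_iff] at h
  refine nsmul_two_semiclosed ?_
  simpa [two_nsmul] using add_nonneg (h.1 x hx) (h.2 x hx)

theorem AbsLE.abs_apply_le (h : AbsLE T S) (x : E) : |T x| ≤ S |x| := by
  rw [absLE_iff] at h
  have hpos : ∀ y, 0 ≤ y → |T y| ≤ S y := fun y hy => by
    have h₁ := h.1 y hy
    have h₂ := h.2 y hy
    rw [sub_apply, sub_nonneg] at h₁
    rw [add_apply, ← neg_le_iff_add_nonneg] at h₂
    exact abs_le'.2 ⟨h₁, h₂⟩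
  calc |T x| = |T x⁺ + -T x⁻| := by rw [← sub_eq_add_neg, ← map_sub, posPart_sub_negPart]
    _ ≤ |T x⁺| + |T x⁻| := (abs_add_le _ _).trans_eq (by rw [abs_neg])
    _ ≤ S x⁺ + S x⁻ := add_le_add (hpos _ (posPart_nonneg x)) (hpos _ (negPart_nonneg x))
    _ = S |x| := by rw [← map_add, posPart_add_negPart]

theorem AbsLE.norm_le (h : AbsLE T S) : ‖T‖ ≤ ‖S‖ := by
  refine T.opNorm_le_bound (norm_nonneg S) fun x => ?_
  calc ‖T x‖ ≤ ‖S |x|‖ := by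
        refine HasSolidNorm.solid ?_
        rw [abs_of_nonneg (h.isPosOp _ (abs_nonneg x))]
        exact h.abs_apply_le x
    _ ≤ ‖S‖ * ‖|x|‖ := S.le_opNorm _
    _ = ‖S‖ * ‖x‖ := by rw [norm_abs_eq_norm]

theorem AbsLE.of_tendsto {ι : Type*} {l : Filter ι} [l.NeBot] {T S : ι → E →L[ℝ] E}
    {T₀ S₀ : E →L[ℝ] E} (hT : Tendsto T l (𝓝 T₀)) (hS : Tendsto S l (𝓝 S₀))
    (h : ∀ i, AbsLE (T i) (S i)) : AbsLE T₀ S₀ := by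
  simp only [absLE_iff] at *
  exact ⟨isClosed_setOf_isPosOp.mem_of_tendsto (hS.sub hT) (Eventually.of_forall fun i => (h i).1),
    isClosed_setOf_isPosOp.mem_of_tendsto (hS.add hT) (Eventually.of_forall fun i => (h i).2)⟩

theorem absLE_tsum_of_tendsto {g D : ℕ → E →L[ℝ] E} (hD : ∀ k, AbsLE (g (k + 1) - g k) (D k))
    (hDs : Summable D) (hg : Tendsto g atTop (𝓝 T)) : AbsLE (T - g 0) (∑' k, D k) := by
  have partial_sums : ∀ j, AbsLE (g j - g 0) (∑ k ∈ Finset.range j, D k) := by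
    intro j
    induction j with
    | zero => simpa using AbsLE.zero
    | succ j ih =>
      rw [Finset.sum_range_succ]
      convert ih.add (hD j) using 1
      abel
  exact AbsLE.of_tendsto (hg.sub_const (g 0)) hDs.hasSum.tendsto_sum_nat partial_sums

variable {c : ℝ}

theorem rPNorm_nonneg (P : Set (E →L[ℝ] E)) (T : E →L[ℝ] E) : 0 ≤ rPNorm P T :=
  Real.sInf_nonneg (by rintro _ ⟨S, -, -, -, rfl⟩; exact norm_nonneg S)

theorem rPNorm_le {P : Set (E →L[ℝ] E)} (hS : S ∈ P) (h : AbsLE T S) : rPNorm P T ≤ ‖S‖ :=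
  csInf_le ⟨0, by rintro _ ⟨S, -, -, -, rfl⟩; exact norm_nonneg S⟩ ⟨S, hS, h.1, h.2, rfl⟩

theorem le_rPNorm {P : Set (E →L[ℝ] E)} (hne : ∃ S ∈ P, AbsLE T S)
    (h : ∀ S ∈ P, AbsLE T S → c ≤ ‖S‖) : c ≤ rPNorm P T := by
  obtain ⟨S, hS, hTS⟩ := hne
  exact le_csInf ⟨_, S, hS, hTS.1, hTS.2, rfl⟩
    (by rintro _ ⟨S, hS, h₁, h₂, rfl⟩; exact h S hS ⟨h₁, h₂⟩)

theorem exists_absLE_norm_lt {P : Set (E →L[ℝ] E)} (hne : ∃ S ∈ P, AbsLE T S)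
    (h : rPNorm P T < c) : ∃ S ∈ P, AbsLE T S ∧ ‖S‖ < c := by
  by_contra! H
  exact h.not_ge (le_rPNorm hne H)

theorem rPNorm_anti {P Q : Set (E →L[ℝ] E)} (hPQ : P ⊆ Q) (hne : ∃ S ∈ P, AbsLE T S) :
    rPNorm Q T ≤ rPNorm P T :=
  le_rPNorm hne fun _ hS h => rPNorm_le (hPQ hS) h

theorem norm_le_rPNorm {P : Set (E →L[ℝ] E)} (hne : ∃ S ∈ P, AbsLE T S) : ‖T‖ ≤ rPNorm P T :=
  le_rPNorm hne fun _ _ h => h.norm_le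

theorem rPNorm_neg (P : Set (E →L[ℝ] E)) (T : E →L[ℝ] E) : rPNorm P (-T) = rPNorm P T := by
  simp only [rPNorm, neg_neg, ← and_assoc, and_comm (a := OpLE (-T) _)]

theorem rPNorm_sub_comm (P : Set (E →L[ℝ] E)) (T T' : E →L[ℝ] E) :
    rPNorm P (T - T') = rPNorm P (T' - T) := by
  rw [← neg_sub, rPNorm_neg]

theorem regNorm_eq_rPNorm_univ (T : E →L[ℝ] E) : regNorm T = rPNorm Set.univ T := by
  simp [regNorm, rPNorm]

theorem regNorm_le_rPNorm {P : Set (E →L[ℝ] E)} (hne : ∃ S ∈ P, AbsLE T S) :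
    regNorm T ≤ rPNorm P T := by
  rw [regNorm_eq_rPNorm_univ]
  exact rPNorm_anti (Set.subset_univ P) hne

theorem norm_le_regNorm {P : Set (E →L[ℝ] E)} (hne : ∃ S ∈ P, AbsLE T S) : ‖T‖ ≤ regNorm T := by
  obtain ⟨S, -, h⟩ := hne
  rw [regNorm_eq_rPNorm_univ]
  exact norm_le_rPNorm ⟨S, Set.mem_univ S, h⟩

variable {P : Submodule ℝ (E →L[ℝ] E)}

theorem isRPOp_iff : IsRPOp P T ↔ T ∈ P ∧ ∃ S ∈ P, AbsLE T S := by
  constructor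
  · rintro ⟨T₁, T₂, h₁, h₂, hp₁, hp₂, rfl⟩
    refine ⟨P.sub_mem h₁ h₂, T₁ + T₂, P.add_mem h₁ h₂, absLE_iff.2 ⟨?_, ?_⟩⟩
    · convert hp₂.add hp₂ using 1; abel
    · convert hp₁.add hp₁ using 1; abel
  · rintro ⟨hT, S, hS, h⟩
    rw [absLE_iff] at h
    exact ⟨(1 / 2 : ℝ) • (S + T), (1 / 2 : ℝ) • (S - T), P.smul_mem _ (P.add_mem hS hT),
      P.smul_mem _ (P.sub_mem hS hT), h.2.smul (by norm_num), h.1.smul (by norm_num), by module⟩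

theorem IsRPOp.mem (hT : IsRPOp P T) : T ∈ P :=
  (isRPOp_iff.1 hT).1

theorem IsRPOp.exists_absLE (hT : IsRPOp P T) : ∃ S ∈ (P : Set (E →L[ℝ] E)), AbsLE T S :=
  (isRPOp_iff.1 hT).2

theorem IsRPOp.add (hT : IsRPOp P T) (hT' : IsRPOp P T') : IsRPOp P (T + T') := by
  obtain ⟨hTP, S, hS, h⟩ := isRPOp_iff.1 hT
  obtain ⟨hTP', S', hS', h'⟩ := isRPOp_iff.1 hT'
  exact isRPOp_iff.2 ⟨P.add_mem hTP hTP', S + S', P.add_mem hS hS', h.add h'⟩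

theorem IsRPOp.smul (hT : IsRPOp P T) (a : ℝ) : IsRPOp P (a • T) := by
  obtain ⟨hTP, S, hS, h⟩ := isRPOp_iff.1 hT
  exact isRPOp_iff.2 ⟨P.smul_mem a hTP, |a| • S, P.smul_mem _ hS, h.smul a⟩

theorem IsRPOp.sub (hT : IsRPOp P T) (hT' : IsRPOp P T') : IsRPOp P (T - T') := by
  simpa [sub_eq_add_neg] using hT.add (hT'.smul (-1))

theorem rPNorm_zero : rPNorm (P : Set (E →L[ℝ] E)) 0 = 0 :=
  le_antisymm (by simpa using rPNorm_le P.zero_mem AbsLE.zero) (rPNorm_nonneg _ _)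

theorem rPNorm_eq_zero_iff (hT : IsRPOp P T) : rPNorm P T = 0 ↔ T = 0 :=
  ⟨fun h => norm_le_zero_iff.1 (h ▸ norm_le_rPNorm hT.exists_absLE), fun h => h ▸ rPNorm_zero⟩

theorem rPNorm_add_le (hT : IsRPOp P T) (hT' : IsRPOp P T') :
    rPNorm P (T + T') ≤ rPNorm P T + rPNorm P T' := by
  refine le_of_forall_pos_lt_add fun ε hε => ?_
  obtain ⟨S, hS, h, hSε⟩ :=
    exists_absLE_norm_lt hT.exists_absLE (lt_add_of_pos_right (rPNorm P T) (half_pos hε))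
  obtain ⟨S', hS', h', hSε'⟩ :=
    exists_absLE_norm_lt hT'.exists_absLE (lt_add_of_pos_right (rPNorm P T') (half_pos hε))
  calc rPNorm P (T + T') ≤ ‖S + S'‖ := rPNorm_le (P.add_mem hS hS') (h.add h')
    _ ≤ ‖S‖ + ‖S'‖ := norm_add_le S S'
    _ < rPNorm P T + rPNorm P T' + ε := by linarith

theorem rPNorm_smul_le (hT : IsRPOp P T) (a : ℝ) : rPNorm P (a • T) ≤ |a| * rPNorm P T := by
  rcases eq_or_ne a 0 with rfl | ha
  · simp [rPNorm_zero]
  have ha' : 0 < |a| := abs_pos.2 ha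
  rw [← div_le_iff₀' ha']
  refine le_rPNorm hT.exists_absLE fun S hS h => ?_
  rw [div_le_iff₀' ha']
  calc rPNorm P (a • T) ≤ ‖|a| • S‖ := rPNorm_le (P.smul_mem _ hS) (h.smul a)
    _ = |a| * ‖S‖ := by rw [norm_smul, Real.norm_eq_abs, abs_abs]

theorem rPNorm_smul (hT : IsRPOp P T) (a : ℝ) : rPNorm P (a • T) = |a| * rPNorm P T := by
  rcases eq_or_ne a 0 with rfl | ha
  · simp [rPNorm_zero]
  refine le_antisymm (rPNorm_smul_le hT a) ?_
  have h := rPNorm_smul_le (hT.smul a) a⁻¹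
  rwa [inv_smul_smul₀ ha, abs_inv, ← div_eq_inv_mul, le_div_iff₀' (abs_pos.2 ha)] at h

variable [CompleteSpace E]

theorem isRPOp_and_rPNorm_sub_le_of_tendsto (hP : IsClosed (P : Set (E →L[ℝ] E)))
    {g : ℕ → E →L[ℝ] E} {T : E →L[ℝ] E} {b : ℕ → ℝ} (hg : ∀ k, IsRPOp P (g k))
    (hgT : Tendsto g atTop (𝓝 T)) (hb : Summable b) (hgb : ∀ k, rPNorm P (g (k + 1) - g k) < b k) :
    IsRPOp P (T - g 0) ∧ rPNorm P (T - g 0) ≤ ∑' k, b k := by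
  choose D hDP hD hDb using fun k =>
    exists_absLE_norm_lt ((hg (k + 1)).sub (hg k)).exists_absLE (hgb k)
  have hDs : Summable D := hb.of_norm_bounded fun k => (hDb k).le
  have hTP : T ∈ P := hP.mem_of_tendsto hgT (Eventually.of_forall fun k => (hg k).mem)
  have hsumP : ∑' k, D k ∈ P := tsum_mem hP hDP
  have habs : AbsLE (T - g 0) (∑' k, D k) := absLE_tsum_of_tendsto hD hDs hgT
  refine ⟨isRPOp_iff.2 ⟨P.sub_mem hTP (hg 0).mem, _, hsumP, habs⟩, ?_⟩
  calc rPNorm P (T - g 0) ≤ ‖∑' k, D k‖ := rPNorm_le hsumP habs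
    _ ≤ ∑' k, b k := tsum_of_norm_bounded hb.hasSum fun k => (hDb k).le

theorem exists_isRPOp_tendsto_rPNorm (hP : IsClosed (P : Set (E →L[ℝ] E)))
    {f : ℕ → E →L[ℝ] E} (hf : ∀ n, IsRPOp P (f n))
    (hC : ∀ ε > (0 : ℝ), ∃ N : ℕ, ∀ m ≥ N, ∀ n ≥ N, rPNorm P (f m - f n) < ε) :
    ∃ T : E →L[ℝ] E, IsRPOp P T ∧ Tendsto (fun n => rPNorm P (f n - T)) atTop (𝓝 0) := by
  have hcauchy : CauchySeq f := Metric.cauchySeq_iff'.2 fun ε hε => by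
    obtain ⟨N, hN⟩ := hC ε hε
    refine ⟨N, fun n hn => ?_⟩
    rw [dist_eq_norm]
    exact (norm_le_rPNorm ((hf n).sub (hf N)).exists_absLE).trans_lt (hN n hn N le_rfl)
  obtain ⟨T, hT⟩ := cauchySeq_tendsto_of_complete hcauchy
  obtain ⟨φ, hφ, hφC⟩ := extraction_forall_of_eventually' fun k =>
    (hC ((1 / 2) ^ k) (by positivity)).imp fun N hN j hj m hm n hn =>
      hN m (hj.trans hm) n (hj.trans hn)
  have htail : ∀ n, IsRPOp P (T - f (φ n)) ∧ rPNorm P (T - f (φ n)) ≤ 2 * (1 / 2) ^ n := by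
    intro n
    have hsub : Tendsto (fun j => φ (j + n)) atTop atTop :=
      hφ.tendsto_atTop.comp (tendsto_add_atTop_nat n)
    have key := isRPOp_and_rPNorm_sub_le_of_tendsto hP (g := fun j => f (φ (j + n)))
      (b := fun j => (1 / 2) ^ j * (1 / 2) ^ n) (fun j => hf _) (hT.comp hsub)
      (summable_geometric_two.mul_right _) fun j => by
        rw [← pow_add]
        exact hφC (j + n) _ (hφ.monotone (by omega)) _ le_rfl
    simpa only [zero_add, tsum_mul_right, tsum_geometric_two] using key
  have hTP : IsRPOp P T := by simpa using (hf (φ 0)).add (htail 0).1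
  refine ⟨T, hTP, Metric.tendsto_atTop.2 fun ε hε => ?_⟩
  obtain ⟨k, hk⟩ :=
    exists_pow_lt_of_lt_one (by positivity : 0 < ε / 3) (by norm_num : (1 / 2 : ℝ) < 1)
  refine ⟨φ k, fun n hn => ?_⟩
  rw [Real.dist_0_eq_abs, abs_of_nonneg (rPNorm_nonneg _ _)]
  calc rPNorm P (f n - T) = rPNorm P ((f n - f (φ k)) + (f (φ k) - T)) := by
        rw [sub_add_sub_cancel]
    _ ≤ rPNorm P (f n - f (φ k)) + rPNorm P (f (φ k) - T) :=
        rPNorm_add_le ((hf n).sub (hf _)) ((hf _).sub hTP)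
    _ < (1 / 2) ^ k + 2 * (1 / 2) ^ k :=
        add_lt_add_of_lt_of_le (hφC k n hn _ le_rfl) ((rPNorm_sub_comm _ _ _).trans_le (htail k).2)
    _ < ε := by linarith

end

/-- For a norm closed linear subspace `P` of `L(E)`, `‖·‖_{r-P}` is a norm on the space of
r-`P`-operators dominating the regular norm (which dominates the operator norm), and the
space of r-`P`-operators is complete in this norm. -/
theorem rPNorm_is_complete_norm
    {E : Type*} [NormedAddCommGroup E] [Lattice E] [HasSolidNorm E] [IsOrderedAddMonoid E] [NormedSpace ℝ E] [CompleteSpace E]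
    (P : Submodule ℝ (E →L[ℝ] E)) (hP : IsClosed (P : Set (E →L[ℝ] E))) :
    -- `‖·‖_{r-P}` is a norm on r-P(E):
    (∀ T : E →L[ℝ] E, IsRPOp (P : Set (E →L[ℝ] E)) T → (rPNorm (P : Set (E →L[ℝ] E)) T = 0 ↔ T = 0)) ∧
    (∀ T S : E →L[ℝ] E, IsRPOp (P : Set (E →L[ℝ] E)) T → IsRPOp (P : Set (E →L[ℝ] E)) S →
      rPNorm (P : Set (E →L[ℝ] E)) (T + S) ≤
        rPNorm (P : Set (E →L[ℝ] E)) T + rPNorm (P : Set (E →L[ℝ] E)) S) ∧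
    (∀ (a : ℝ) (T : E →L[ℝ] E), IsRPOp (P : Set (E →L[ℝ] E)) T →
      rPNorm (P : Set (E →L[ℝ] E)) (a • T) = |a| * rPNorm (P : Set (E →L[ℝ] E)) T) ∧
    -- it dominates the regular norm, which dominates the operator norm:
    (∀ T : E →L[ℝ] E, IsRPOp (P : Set (E →L[ℝ] E)) T →
      rPNorm (P : Set (E →L[ℝ] E)) T ≥ regNorm T ∧ regNorm T ≥ ‖T‖) ∧
    -- completeness: every `‖·‖_{r-P}`-Cauchy sequence of r-P-operators converges in
    -- `‖·‖_{r-P}` to an r-P-operator: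
    (∀ f : ℕ → E →L[ℝ] E, (∀ n, IsRPOp (P : Set (E →L[ℝ] E)) (f n)) →
      (∀ ε > (0 : ℝ), ∃ N : ℕ, ∀ m ≥ N, ∀ n ≥ N,
        rPNorm (P : Set (E →L[ℝ] E)) (f m - f n) < ε) →
      ∃ T : E →L[ℝ] E, IsRPOp (P : Set (E →L[ℝ] E)) T ∧
        Tendsto (fun n => rPNorm (P : Set (E →L[ℝ] E)) (f n - T)) atTop (𝓝 0)) := by
  refine ⟨fun T hT => rPNorm_eq_zero_iff hT, fun T S hT hS => rPNorm_add_le hT hS,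
    fun a T hT => rPNorm_smul hT a, fun T hT => ?_,
    fun f hf hC => exists_isRPOp_tendsto_rPNorm hP hf hC⟩
  exact ⟨regNorm_le_rPNorm hT.exists_absLE, norm_le_regNorm hT.exists_absLE⟩
end

section
/- Let E be a Banach lattice. Every regular operator on E (i.e. every difference of two positive bounded operators E → E) can be written as a difference of two positive limitedly L-weakly compact operators if and only if the identity operator on E is limitedly L-weakly compact. -/
/-! If `id = S₁ - S₂` with `S₁, S₂` limitedly L-weakly compact, then every limited set `A`
lies in `S₁ A - S₂ A`, and a difference of two L-weakly compact sets is L-weakly compact: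
by the Riesz decomposition, a disjoint sequence in its solid hull splits into two disjoint
sequences, one in the solid hull of each set. Conversely, bounded operators preserve
limited sets, so if the identity is limitedly L-weakly compact then so is every bounded
operator, and the given decomposition `T₁ - T₂` of a regular operator already works. -/

open Filter Topology

/-- A sequence of functionals converges to zero uniformly on a set `A`. -/
def UnifNullOn {X : Type*} [NormedAddCommGroup X] [NormedSpace ℝ X]
    (f : ℕ → X →L[ℝ] ℝ) (A : Set X) : Prop :=
  ∀ ε > (0 : ℝ), ∃ N : ℕ, ∀ n ≥ N, ∀ a ∈ A, |f n a| ≤ ε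

/-- A norm bounded set `A` is limited: every weak*-null sequence in the dual converges
to zero uniformly on `A`. -/
def IsLimitedSet {X : Type*} [NormedAddCommGroup X] [NormedSpace ℝ X] (A : Set X) : Prop :=
  Bornology.IsBounded A ∧
    ∀ f : ℕ → X →L[ℝ] ℝ,
      (∀ x : X, Tendsto (fun n => f n x) atTop (𝓝 0)) →
        UnifNullOn f A

/-- The solid hull of a set in a Banach lattice. -/
def solHull {F : Type*} [NormedAddCommGroup F] [Lattice F] [HasSolidNorm F] [IsOrderedAddMonoid F] (A : Set F) : Set F :=
  {x | ∃ a ∈ A, |x| ≤ |a|}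

/-- A subset of a Banach lattice is L-weakly compact (Lwc) if it is norm bounded and every
disjoint sequence in its solid hull is norm null. -/
def IsLwcSet {F : Type*} [NormedAddCommGroup F] [Lattice F] [HasSolidNorm F] [IsOrderedAddMonoid F] (A : Set F) : Prop :=
  Bornology.IsBounded A ∧
    ∀ x : ℕ → F, (∀ n, x n ∈ solHull A) →
      (∀ n m, n ≠ m → |x n| ⊓ |x m| = 0) →
        Tendsto (fun n => ‖x n‖) atTop (𝓝 0)

/-- An operator is limitedly L-weakly compact if it carries limited sets onto Lwc sets. -/
def IsLLwcOp {X : Type*} [NormedAddCommGroup X] [NormedSpace ℝ X]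
    {F : Type*} [NormedAddCommGroup F] [Lattice F] [HasSolidNorm F] [IsOrderedAddMonoid F] [NormedSpace ℝ F] (T : X →L[ℝ] F) : Prop :=
  ∀ A : Set X, IsLimitedSet A → IsLwcSet (T '' A)

open Pointwise

section LatticeOrderedGroup

variable {α : Type*} [Lattice α] [AddCommGroup α] [IsOrderedAddMonoid α]

theorem exists_add_eq_of_le_add {w u v : α} (hw : 0 ≤ w) (hu : 0 ≤ u) (hv : 0 ≤ v)
    (h : w ≤ u + v) : ∃ y z, 0 ≤ y ∧ y ≤ u ∧ 0 ≤ z ∧ z ≤ v ∧ w = y + z := by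
  refine ⟨w ⊓ u, w - w ⊓ u, le_inf hw hu, inf_le_right, sub_nonneg.2 inf_le_left, ?_,
    (add_sub_cancel _ _).symm⟩
  rw [sub_inf, sub_self]
  exact sup_le hv (sub_le_iff_le_add.2 (h.trans_eq (add_comm _ _)))

theorem abs_inf_abs_eq_zero_of_abs_le {x y x' y' : α} (hx : |x'| ≤ |x|) (hy : |y'| ≤ |y|)
    (h : |x| ⊓ |y| = 0) : |x'| ⊓ |y'| = 0 :=
  le_antisymm (h ▸ inf_le_inf hx hy) (le_inf (abs_nonneg _) (abs_nonneg _))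

end LatticeOrderedGroup

section LwcSet

variable {F : Type*} [NormedAddCommGroup F] [Lattice F] [HasSolidNorm F] [IsOrderedAddMonoid F]
  {A B C : Set F}

theorem solHull_mono (h : A ⊆ B) : solHull A ⊆ solHull B :=
  fun _ ⟨a, ha, hxa⟩ => ⟨a, h ha, hxa⟩

theorem IsLwcSet.mono (hB : IsLwcSet B) (h : A ⊆ B) : IsLwcSet A :=
  ⟨hB.1.subset h, fun x hx => hB.2 x fun n => solHull_mono h (hx n)⟩

theorem exists_split_of_mem_solHull_sub {x : F} (hx : x ∈ solHull (B - C)) :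
    ∃ y ∈ solHull B, ∃ z ∈ solHull C, |y| ≤ |x| ∧ |z| ≤ |x| ∧ ‖x‖ ≤ ‖y‖ + ‖z‖ := by
  obtain ⟨_, ⟨b, hb, c, hc, rfl⟩, hxbc⟩ := hx
  have hbc : |b - c| ≤ |b| + |c| := by
    simpa only [sub_eq_add_neg, abs_neg] using abs_add_le b (-c)
  obtain ⟨y, z, hy, hyb, hz, hzc, hxyz⟩ :=
    exists_add_eq_of_le_add (abs_nonneg x) (abs_nonneg b) (abs_nonneg c) (hxbc.trans hbc)
  have hyx : y ≤ |x| := hxyz ▸ le_add_of_nonneg_right hz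
  have hzx : z ≤ |x| := hxyz ▸ le_add_of_nonneg_left hy
  rw [← abs_of_nonneg hy] at hyb hyx
  rw [← abs_of_nonneg hz] at hzc hzx
  refine ⟨y, ⟨b, hb, hyb⟩, z, ⟨c, hc, hzc⟩, hyx, hzx, ?_⟩
  calc ‖x‖ = ‖|y| + |z|‖ := by rw [← norm_abs_eq_norm, hxyz, abs_of_nonneg hy, abs_of_nonneg hz]
    _ ≤ ‖|y|‖ + ‖|z|‖ := norm_add_le _ _
    _ = ‖y‖ + ‖z‖ := by rw [norm_abs_eq_norm, norm_abs_eq_norm]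

theorem IsLwcSet.sub (hB : IsLwcSet B) (hC : IsLwcSet C) : IsLwcSet (B - C) := by
  refine ⟨hB.1.sub hC.1, fun x hx hdisj => ?_⟩
  choose y hyB z hzC hyx hzx hxyz using fun n => exists_split_of_mem_solHull_sub (hx n)
  have hy := hB.2 y hyB fun n m hnm =>
    abs_inf_abs_eq_zero_of_abs_le (hyx n) (hyx m) (hdisj n m hnm)
  have hz := hC.2 z hzC fun n m hnm =>
    abs_inf_abs_eq_zero_of_abs_le (hzx n) (hzx m) (hdisj n m hnm)
  exact squeeze_zero (fun n => norm_nonneg _) hxyz (by simpa using hy.add hz)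

end LwcSet

section Operators

variable {X Y : Type*} [NormedAddCommGroup X] [NormedSpace ℝ X] [NormedAddCommGroup Y]
  [NormedSpace ℝ Y] {F : Type*} [NormedAddCommGroup F] [Lattice F] [HasSolidNorm F]
  [IsOrderedAddMonoid F] [NormedSpace ℝ F]

theorem IsLimitedSet.image {A : Set X} (hA : IsLimitedSet A) (T : X →L[ℝ] Y) :
    IsLimitedSet (T '' A) := by
  refine ⟨T.lipschitz.isBounded_image hA.1, fun f hf ε hε => ?_⟩
  obtain ⟨N, hN⟩ := hA.2 (fun n => (f n).comp T) (fun x => hf (T x)) ε hε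
  exact ⟨N, fun n hn _ ⟨a, ha, hTa⟩ => hTa ▸ hN n hn a ha⟩

theorem IsLLwcOp.comp {T : Y →L[ℝ] F} (hT : IsLLwcOp T) (S : X →L[ℝ] Y) :
    IsLLwcOp (T.comp S) := fun A hA => by
  rw [ContinuousLinearMap.coe_comp, Set.image_comp]
  exact hT _ (hA.image S)

theorem IsLLwcOp.sub {S₁ S₂ : X →L[ℝ] F} (h₁ : IsLLwcOp S₁) (h₂ : IsLLwcOp S₂) :
    IsLLwcOp (S₁ - S₂) := fun A hA =>
  ((h₁ A hA).sub (h₂ A hA)).mono <| by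
    rintro _ ⟨a, ha, rfl⟩
    exact ⟨S₁ a, ⟨a, ha, rfl⟩, S₂ a, ⟨a, ha, rfl⟩, rfl⟩

end Operators

theorem regular_eq_rLLwc_iff_id_lLwc_general
    {E : Type*} [NormedAddCommGroup E] [Lattice E] [HasSolidNorm E] [IsOrderedAddMonoid E] [NormedSpace ℝ E] :
    (∀ T : E →L[ℝ] E,
        (∃ T₁ T₂ : E →L[ℝ] E, IsPosOp T₁ ∧ IsPosOp T₂ ∧ T = T₁ - T₂) →
        ∃ S₁ S₂ : E →L[ℝ] E, IsPosOp S₁ ∧ IsPosOp S₂ ∧ IsLLwcOp S₁ ∧ IsLLwcOp S₂ ∧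
          T = S₁ - S₂) ↔
      IsLLwcOp (ContinuousLinearMap.id ℝ E) := by
  constructor
  · intro h
    have hid_regular : ∃ T₁ T₂ : E →L[ℝ] E, IsPosOp T₁ ∧ IsPosOp T₂ ∧
        ContinuousLinearMap.id ℝ E = T₁ - T₂ :=
      ⟨ContinuousLinearMap.id ℝ E, 0, fun _ hx => hx, fun _ _ => le_rfl, (sub_zero _).symm⟩
    obtain ⟨S₁, S₂, -, -, h₁, h₂, hid⟩ := h _ hid_regular
    exact hid ▸ h₁.sub h₂
  · rintro hid T ⟨T₁, T₂, h₁, h₂, rfl⟩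
    have hall : ∀ S : E →L[ℝ] E, IsLLwcOp S := fun S => by
      simpa using hid.comp S
    exact ⟨T₁, T₂, h₁, h₂, hall T₁, hall T₂, rfl⟩

/-- Every regular operator on `E` is a difference of two positive limitedly L-weakly compact
operators iff the identity of `E` is limitedly L-weakly compact. -/
theorem regular_eq_rLLwc_iff_id_lLwc
    {E : Type*} [NormedAddCommGroup E] [Lattice E] [HasSolidNorm E] [IsOrderedAddMonoid E] [NormedSpace ℝ E] [CompleteSpace E] :
    (∀ T : E →L[ℝ] E,
        (∃ T₁ T₂ : E →L[ℝ] E, IsPosOp T₁ ∧ IsPosOp T₂ ∧ T = T₁ - T₂) →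
        ∃ S₁ S₂ : E →L[ℝ] E, IsPosOp S₁ ∧ IsPosOp S₂ ∧ IsLLwcOp S₁ ∧ IsLLwcOp S₂ ∧
          T = S₁ - S₂) ↔
      IsLLwcOp (ContinuousLinearMap.id ℝ E) :=
  regular_eq_rLLwc_iff_id_lLwc_general
end
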